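/- Let N ≥ 1 and M ≥ 1 be integers. Let v : Fin M → ℝ be injective (distinct velocity nodes) and let w : Fin M → ℝ be weights such that Σ_{m} w(m)·q(v(m)) = ∫_ℝ q(u)·exp(−u²) du for every polynomial q ∈ ℝ[X] of degree at most 2M−1. For j ∈ Fin M let ℓ_j ∈ ℝ[X] be the Lagrange basis polynomial of degree at most M−1 at the nodes v (so ℓ_j(v(m)) = δ_{jm}), and set D(m, j) = ℓ_j′(v(m)). Let A : Fin N → Fin N → ℝ satisfy Σ_{n} A(n, i) = 0 for every i. Let c : Fin N → Fin M → ℝ, Eℓ : Fin N → ℝ, Δt ∈ ℝ, and define c′(n, m) = c(n, m) + Δt·(−v(m)·Σ_{i} A(n, i)·c(i, m) + Eℓ(n)·(Σ_{j} D(m, j)·c(n, j) − 2·v(m)·c(n, m))). Then Σ_{n} Σ_{m} w(m)·c′(n, m) = Σ_{n} Σ_{m} w(m)·c(n, m). -/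

import Mathlib

/-!
The transport part of the increment has zero weighted sum because the spatial differentiation
matrix has zero column sums. In the field part, `c n ·` are the nodal values of the interpolant
`p = ∑ j, c n j • ℓ j`, so its weighted sum is the quadrature of `p' - 2 u p`. This polynomial has
degree at most `M ≤ 2M - 1`, so the quadrature equals `∫ (p u * exp (-u ^ 2))' du = 0`.
-/
open Polynomial MeasureTheory Real Finset

lemma Polynomial.integrable_eval_mul_exp_neg_sq (p : ℝ[X]) :
    Integrable fun u : ℝ => p.eval u * exp (-u ^ 2) := by
  induction p using Polynomial.induction_on' with
  | add p q hp hq => simpa only [eval_add, add_mul] using hp.fun_add hq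
  | monomial n a =>
    have h := (integrable_rpow_mul_exp_neg_mul_sq one_pos
      (by linarith [n.cast_nonneg (α := ℝ)] : (-1 : ℝ) < n)).const_mul a
    refine h.congr (.of_forall fun u => ?_)
    simp [mul_assoc]

lemma Polynomial.hasDerivAt_eval_mul_exp_neg_sq (p : ℝ[X]) (u : ℝ) :
    HasDerivAt (fun u : ℝ => p.eval u * exp (-u ^ 2))
      ((derivative p - C 2 * X * p).eval u * exp (-u ^ 2)) u := by
  have hexp : HasDerivAt (fun u : ℝ => exp (-u ^ 2)) (exp (-u ^ 2) * -(2 * u)) u := by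
    simpa using ((hasDerivAt_pow 2 u).neg).exp
  refine ((p.hasDerivAt u).fun_mul hexp).congr_deriv ?_
  simp only [eval_sub, eval_mul, eval_C, eval_X]
  ring

lemma Polynomial.integral_eval_derivative_sub_mul_exp_neg_sq (p : ℝ[X]) :
    ∫ u : ℝ, (derivative p - C 2 * X * p).eval u * exp (-u ^ 2) = 0 :=
  integral_eq_zero_of_hasDerivAt_of_integrable p.hasDerivAt_eval_mul_exp_neg_sq
    (integrable_eval_mul_exp_neg_sq _) p.integrable_eval_mul_exp_neg_sq

lemma sum_sum_mul_eq_zero_of_sum_col_eq_zero {ι κ R : Type*} [Fintype ι] [Fintype κ]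
    [NonUnitalNonAssocSemiring R] (A : ι → κ → R) (hA : ∀ i, ∑ n, A n i = 0) (x : κ → R) :
    ∑ n, ∑ i, A n i * x i = 0 := by
  rw [sum_comm]
  simp [← sum_mul, hA]

def GaussianQuadratureExact {ι : Type*} [Fintype ι] (v w : ι → ℝ) (d : ℕ) : Prop :=
  ∀ q : ℝ[X], q.natDegree ≤ d → ∑ m, w m * q.eval (v m) = ∫ u : ℝ, q.eval u * exp (-u ^ 2)

section Quadrature

variable {ι : Type*} [Fintype ι] {v w : ι → ℝ} {d : ℕ}

lemma GaussianQuadratureExact.sum_mul_eval_derivative_sub_eq_zero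
    (hquad : GaussianQuadratureExact v w d) {p : ℝ[X]} (hp : p.natDegree + 1 ≤ d) :
    ∑ m, w m * ((derivative p).eval (v m) - 2 * v m * p.eval (v m)) = 0 := by
  have hdeg : (derivative p - C 2 * X * p).natDegree ≤ d := by
    refine (natDegree_sub_le _ _).trans (max_le ?_ ?_)
    · have := natDegree_derivative_le p
      omega
    · refine natDegree_mul_le.trans ?_
      have := (natDegree_C_mul_le (2 : ℝ) (X : ℝ[X])).trans natDegree_X_le
      omega
  simpa [mul_sub, mul_assoc] using (hquad _ hdeg).trans p.integral_eval_derivative_sub_mul_exp_neg_sq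

lemma GaussianQuadratureExact.sum_mul_sum_eval_derivative_lagrange_sub_eq_zero [DecidableEq ι]
    (hquad : GaussianQuadratureExact v w d) {ℓ : ι → ℝ[X]} {k : ℕ}
    (hℓdeg : ∀ j, (ℓ j).natDegree ≤ k) (hk : k + 1 ≤ d)
    (hℓeval : ∀ j m, (ℓ j).eval (v m) = if j = m then 1 else 0) (f : ι → ℝ) :
    ∑ m, w m * (∑ j, (derivative (ℓ j)).eval (v m) * f j - 2 * v m * f m) = 0 := by
  set p := ∑ j, C (f j) * ℓ j
  have hdeg : p.natDegree ≤ k :=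
    natDegree_sum_le_of_forall_le _ _ fun j _ => (natDegree_C_mul_le _ _).trans (hℓdeg j)
  have heval : ∀ m, p.eval (v m) = f m := by simp [p, eval_finsetSum, hℓeval]
  have hderiv : ∀ m, (derivative p).eval (v m) = ∑ j, (derivative (ℓ j)).eval (v m) * f j := by
    simp [p, eval_finsetSum, mul_comm]
  simpa only [heval, hderiv] using hquad.sum_mul_eval_derivative_sub_eq_zero (p := p) (by omega)

end Quadrature

theorem discrete_mass_conservation_fourier_hermite
    (N M : ℕ) (hM : 1 ≤ M)
    (v : Fin M → ℝ)
    (w : Fin M → ℝ)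
    (hquad : ∀ q : Polynomial ℝ, q.natDegree ≤ 2 * M - 1 →
      ∑ m : Fin M, w m * q.eval (v m) = ∫ u : ℝ, q.eval u * Real.exp (-u ^ 2))
    (ℓ : Fin M → Polynomial ℝ)
    (hℓdeg : ∀ j : Fin M, (ℓ j).natDegree ≤ M - 1)
    (hℓeval : ∀ j m : Fin M, (ℓ j).eval (v m) = if j = m then 1 else 0)
    (D : Fin M → Fin M → ℝ)
    (hD : ∀ m j : Fin M, D m j = (derivative (ℓ j)).eval (v m))
    (A : Fin N → Fin N → ℝ) (hA : ∀ i : Fin N, ∑ n : Fin N, A n i = 0)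
    (c : Fin N → Fin M → ℝ) (Eℓ : Fin N → ℝ) (Δt : ℝ)
    (c' : Fin N → Fin M → ℝ)
    (hc' : ∀ (n : Fin N) (m : Fin M),
      c' n m = c n m + Δt * (-(v m) * (∑ i : Fin N, A n i * c i m)
        + Eℓ n * ((∑ j : Fin M, D m j * c n j) - 2 * v m * c n m))) :
    ∑ n : Fin N, ∑ m : Fin M, w m * c' n m
      = ∑ n : Fin N, ∑ m : Fin M, w m * c n m := by
  have htransport (m : Fin M) : ∑ n, ∑ i, A n i * c i m = 0 :=
    sum_sum_mul_eq_zero_of_sum_col_eq_zero A hA (c · m)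
  have hfield (n : Fin N) : ∑ m, w m * (∑ j, D m j * c n j - 2 * v m * c n m) = 0 := by
    simpa only [hD] using (show GaussianQuadratureExact v w (2 * M - 1) from hquad)
      |>.sum_mul_sum_eval_derivative_lagrange_sub_eq_zero hℓdeg (by omega) hℓeval (c n)
  suffices ∑ n, ∑ m, w m * (c' n m - c n m) = 0 by
    simpa only [mul_sub, sum_sub_distrib, sub_eq_zero] using this
  calc ∑ n, ∑ m, w m * (c' n m - c n m)
      = ∑ n, ∑ m, Δt * -(w m * v m) * ∑ i, A n i * c i m
        + ∑ n, ∑ m, Δt * Eℓ n * (w m * (∑ j, D m j * c n j - 2 * v m * c n m)) := by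
        simp only [← sum_add_distrib, hc']
        exact sum_congr rfl fun n _ => sum_congr rfl fun m _ => by ring
    _ = 0 := by
        rw [sum_comm (f := fun n m => Δt * -(w m * v m) * ∑ i, A n i * c i m)]
        simp only [← mul_sum, htransport, hfield, mul_zero, sum_const_zero, add_zero]
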